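/- For every k ≥ 1, the Zykov graph Z_k is triangle-free and has chromatic number exactly k. -/

import Mathlib

/-- Data for the Zykov construction at step k (0-indexed, so `V` at index k carries the
paper's graph Z_{k+1}): `V` is the vertex set of Z_{k+1} with graph `GV`; `W` is the
vertex set of the disjoint union of Z_1, ..., Z_{k+1} with graph `GW`; `T` is the set of
tuples picking one vertex in each of Z_1, ..., Z_{k+1}; and `mem t w` means that w is one
of the coordinates of the tuple t. -/
structure ZykovPack where
  V : Type
  W : Type
  T : Type
  GV : SimpleGraph V
  GW : SimpleGraph W
  mem : T → W → Prop

/-- One step of the Zykov construction. -/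
def zykovStep (P : ZykovPack) : ZykovPack :=
  -- the vertices of the next Zykov graph: the disjoint union of the previous Zykov
  -- graphs plus one new vertex for each tuple
  let V' : Type := P.W ⊕ P.T
  let GV' : SimpleGraph V' := SimpleGraph.fromRel (fun a b =>
    match a, b with
    | Sum.inl w, Sum.inl w' => P.GW.Adj w w'
    | Sum.inl w, Sum.inr t => P.mem t w
    | _, _ => False)
  { V := V'
    W := P.W ⊕ V'
    T := P.T × V'
    GV := GV'
    GW := SimpleGraph.fromRel (fun a b =>
      match a, b with
      | Sum.inl w, Sum.inl w' => P.GW.Adj w w'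
      | Sum.inr x, Sum.inr y => GV'.Adj x y
      | _, _ => False)
    mem := fun t w =>
      match w with
      | Sum.inl w => P.mem t.1 w
      | Sum.inr v => v = t.2 }

/-- The inductive Zykov construction: Z_1 is a single vertex, and Z_{k+1} is the disjoint
union of Z_1, ..., Z_k together with, for each k-tuple (v_1, ..., v_k) with v_i ∈ Z_i, a
new vertex adjacent exactly to v_1, ..., v_k. -/
def zykovPack : ℕ → ZykovPack
  | 0 =>
    { V := PUnit, W := PUnit, T := PUnit
      GV := ⊥, GW := ⊥
      mem := fun t w => t = w }
  | n + 1 => zykovStep (zykovPack n)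

/-- The Zykov graph Z_k (for k ≥ 1). -/
def zykovGraph (k : ℕ) : SimpleGraph (zykovPack (k - 1)).V := (zykovPack (k - 1)).GV

section ZykovAux

open SimpleGraph

variable (P : ZykovPack)

private lemma gv_inl_inl (w w' : P.W) :
    (zykovStep P).GV.Adj (Sum.inl w) (Sum.inl w') ↔ P.GW.Adj w w' := by
  show (SimpleGraph.fromRel _).Adj _ _ ↔ _
  refine (SimpleGraph.fromRel_adj _ _ _).trans ?_
  constructor
  · rintro ⟨-, h | h⟩
    · exact h
    · exact h.symm
  · intro h
    exact ⟨fun he => h.ne (by injection he), Or.inl h⟩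

private lemma gv_inl_inr (w : P.W) (t : P.T) :
    (zykovStep P).GV.Adj (Sum.inl w) (Sum.inr t) ↔ P.mem t w := by
  show (SimpleGraph.fromRel _).Adj _ _ ↔ _
  refine (SimpleGraph.fromRel_adj _ _ _).trans ?_
  constructor
  · rintro ⟨-, h | h⟩
    · exact h
    · exact h.elim
  · intro h
    exact ⟨fun he => by injection he, Or.inl h⟩

private lemma gv_inr_inr (t t' : P.T) :
    ¬ (zykovStep P).GV.Adj (Sum.inr t) (Sum.inr t') := by
  show ¬ (SimpleGraph.fromRel _).Adj _ _
  refine mt (SimpleGraph.fromRel_adj _ _ _).mp ?_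
  rintro ⟨-, h | h⟩ <;> exact h

private lemma gw_inl_inl (w w' : P.W) :
    (zykovStep P).GW.Adj (Sum.inl w) (Sum.inl w') ↔ P.GW.Adj w w' := by
  show (SimpleGraph.fromRel _).Adj _ _ ↔ _
  refine (SimpleGraph.fromRel_adj _ _ _).trans ?_
  constructor
  · rintro ⟨-, h | h⟩
    · exact h
    · exact h.symm
  · intro h
    exact ⟨fun he => h.ne (by injection he), Or.inl h⟩

private lemma gw_inl_inr (w : P.W) (x : (zykovStep P).V) :
    ¬ (zykovStep P).GW.Adj (Sum.inl w) (Sum.inr x) := by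
  show ¬ (SimpleGraph.fromRel _).Adj _ _
  refine mt (SimpleGraph.fromRel_adj _ _ _).mp ?_
  rintro ⟨-, h | h⟩ <;> exact h

private lemma gw_inr_inr (x y : (zykovStep P).V) :
    (zykovStep P).GW.Adj (Sum.inr x) (Sum.inr y) ↔ (zykovStep P).GV.Adj x y := by
  show (SimpleGraph.fromRel _).Adj _ _ ↔ _
  refine (SimpleGraph.fromRel_adj _ _ _).trans ?_
  constructor
  · rintro ⟨-, h | h⟩
    · exact h
    · exact h.symm
  · intro h
    exact ⟨fun he => h.ne (by injection he), Or.inl h⟩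

private lemma cliqueFree3_of {V : Type} (G : SimpleGraph V)
    (h : ∀ a b c, G.Adj a b → G.Adj a c → G.Adj b c → False) : G.CliqueFree 3 := by
  classical
  intro s hs
  rw [SimpleGraph.is3Clique_iff] at hs
  obtain ⟨a, b, c, hab, hac, hbc, -⟩ := hs
  exact h a b c hab hac hbc

private lemma triangle {V : Type} {G : SimpleGraph V} (h : G.CliqueFree 3) {a b c : V}
    (hab : G.Adj a b) (hac : G.Adj a c) (hbc : G.Adj b c) : False := by
  classical
  exact h {a, b, c} (SimpleGraph.is3Clique_triple_iff.mpr ⟨hab, hac, hbc⟩)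

private theorem zykovInv (n : ℕ) :
    (zykovPack n).GW.CliqueFree 3 ∧
    (zykovPack n).GV.CliqueFree 3 ∧
    (∀ t w w', (zykovPack n).mem t w → (zykovPack n).mem t w' →
      ¬ (zykovPack n).GW.Adj w w') ∧
    (zykovPack n).GW.Colorable (n+1) ∧
    (zykovPack n).GV.Colorable (n+1) ∧
    ¬ (zykovPack n).GV.Colorable n ∧
    (∀ (α : Type) (c : (zykovPack n).GW.Coloring α),
      ∃ (t : (zykovPack n).T) (f : Fin (n+1) → (zykovPack n).W),
        (∀ i, (zykovPack n).mem t (f i)) ∧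
        Function.Injective (fun i => c (f i))) := by
  induction n with
  | zero =>
    refine ⟨?_, ?_, ?_, ?_, ?_, ?_, ?_⟩
    · exact cliqueFree3_of _ (fun a b c h1 _ _ => h1.elim)
    · exact cliqueFree3_of _ (fun a b c h1 _ _ => h1.elim)
    · exact fun t w w' _ _ h => h.elim
    · exact ⟨SimpleGraph.Coloring.mk (fun _ => 0) (fun h => h.elim)⟩
    · exact ⟨SimpleGraph.Coloring.mk (fun _ => 0) (fun h => h.elim)⟩
    · rintro ⟨C⟩
      exact (C PUnit.unit).elim0
    · intro α c
      exact ⟨PUnit.unit, fun _ => PUnit.unit, fun _ => rfl,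
        fun i j _ => Fin.ext (by omega)⟩
  | succ n ih =>
    obtain ⟨hW3, hV3, hind, hWcol, hVcol, hVncol, hkey⟩ := ih
    set P := zykovPack n with hP
    -- the (n+1)-pack is `zykovStep P` definitionally
    have hgv3 : (zykovStep P).GV.CliqueFree 3 := by
      apply cliqueFree3_of
      rintro (w | t) (w' | t') (w'' | t'') h1 h2 h3
      · exact triangle hW3 ((gv_inl_inl P _ _).mp h1) ((gv_inl_inl P _ _).mp h2)
          ((gv_inl_inl P _ _).mp h3)
      · exact hind t'' w w' ((gv_inl_inr P _ _).mp h2) ((gv_inl_inr P _ _).mp h3)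
          ((gv_inl_inl P _ _).mp h1)
      · exact hind t' w w'' ((gv_inl_inr P _ _).mp h1)
          ((gv_inl_inr P _ _).mp (h3.symm)) ((gv_inl_inl P _ _).mp h2)
      · exact gv_inr_inr P _ _ h3
      · exact hind t w' w'' ((gv_inl_inr P _ _).mp h1.symm)
          ((gv_inl_inr P _ _).mp h2.symm) ((gv_inl_inl P _ _).mp h3)
      · exact gv_inr_inr P _ _ h2
      · exact gv_inr_inr P _ _ h1
      · exact gv_inr_inr P _ _ h1
    have hgw3 : (zykovStep P).GW.CliqueFree 3 := by
      apply cliqueFree3_of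
      rintro (w | x) (w' | x') (w'' | x'') h1 h2 h3
      · exact triangle hW3 ((gw_inl_inl P _ _).mp h1) ((gw_inl_inl P _ _).mp h2)
          ((gw_inl_inl P _ _).mp h3)
      · exact gw_inl_inr P _ _ h2
      · exact gw_inl_inr P _ _ h1
      · exact gw_inl_inr P _ _ h1
      · exact gw_inl_inr P _ _ h1.symm
      · exact gw_inl_inr P _ _ h3
      · exact gw_inl_inr P _ _ h2.symm
      · exact triangle hgv3 ((gw_inr_inr P _ _).mp h1) ((gw_inr_inr P _ _).mp h2)
          ((gw_inr_inr P _ _).mp h3)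
    have hind' : ∀ t w w', (zykovStep P).mem t w → (zykovStep P).mem t w' →
        ¬ (zykovStep P).GW.Adj w w' := by
      rintro ⟨t, v⟩ (w | x) (w' | x') h1 h2 hadj
      · exact hind t w w' h1 h2 ((gw_inl_inl P _ _).mp hadj)
      · exact gw_inl_inr P _ _ hadj
      · exact gw_inl_inr P _ _ hadj.symm
      · cases h1; cases h2; exact ((gw_inr_inr P _ _).mp hadj).ne rfl
    have hgvcol : (zykovStep P).GV.Colorable (n+2) := by
      obtain ⟨C⟩ := hWcol
      refine ⟨SimpleGraph.Coloring.mk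
        (fun x => Sum.elim (fun w => (C w).castSucc) (fun _ => Fin.last (n+1)) x) ?_⟩
      rintro (w | t) (w' | t') hadj
      · simpa using C.valid ((gv_inl_inl P _ _).mp hadj)
      · simpa using (Fin.castSucc_lt_last (C w)).ne
      · simpa using (Fin.castSucc_lt_last (C w')).ne.symm
      · exact (gv_inr_inr P _ _ hadj).elim
    have hgwcol : (zykovStep P).GW.Colorable (n+2) := by
      obtain ⟨C⟩ := hWcol
      obtain ⟨C'⟩ := hgvcol
      refine ⟨SimpleGraph.Coloring.mk
        (fun x => Sum.elim (fun w => (C w).castSucc) (fun v => C' v) x) ?_⟩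
      rintro (w | x) (w' | x') hadj
      · exact fun h => C.valid ((gw_inl_inl P _ _).mp hadj) (Fin.castSucc_injective _ h)
      · exact (gw_inl_inr P _ _ hadj).elim
      · exact (gw_inl_inr P _ _ hadj.symm).elim
      · exact C'.valid ((gw_inr_inr P _ _).mp hadj)
    have hgvncol : ¬ (zykovStep P).GV.Colorable (n+1) := by
      rintro ⟨C⟩
      obtain ⟨t, f, hmem, hinj⟩ := hkey (Fin (n+1))
        (SimpleGraph.Coloring.mk (fun w => C (Sum.inl w))
          (fun h => C.valid ((gv_inl_inl P _ _).mpr h)))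
      have hinj2 : Function.Injective (fun i => C (Sum.inl (f i))) := hinj
      have hsurj : Function.Surjective (fun i => C (Sum.inl (f i))) :=
        Finite.surjective_of_injective hinj2
      obtain ⟨i, hi⟩ := hsurj (C (Sum.inr t))
      have hi' : C (Sum.inl (f i)) = C (Sum.inr t) := hi
      exact C.valid ((gv_inl_inr P (f i) t).mpr (hmem i)) hi'
    refine ⟨hgw3, hgv3, hind', hgwcol, hgvcol, hgvncol, ?_⟩
    intro α c
    classical
    obtain ⟨t, f, hmem, hinj⟩ := hkey α
      (SimpleGraph.Coloring.mk (fun w => c (Sum.inl w))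
        (fun h => c.valid ((gw_inl_inl P _ _).mpr h)))
    set S : Finset α := Finset.univ.image (fun i => c (Sum.inl (f i))) with hS
    have hinj2 : Function.Injective (fun i => c (Sum.inl (f i))) := hinj
    have hcard : S.card = n + 1 := by
      rw [hS, Finset.card_image_of_injective _ hinj2, Finset.card_univ, Fintype.card_fin]
    have hex : ∃ v : (zykovStep P).V, c (Sum.inr v) ∉ S := by
      by_contra hall
      push_neg at hall
      have C' : (zykovStep P).GV.Coloring {x // x ∈ S} :=
        SimpleGraph.Coloring.mk (fun v => ⟨c (Sum.inr v), hall v⟩)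
          (fun {x y} h hxy => c.valid ((gw_inr_inr P x y).mpr h) (by
            simpa using congrArg Subtype.val hxy))
      have := C'.colorable
      rw [Fintype.card_coe, hcard] at this
      exact hgvncol this
    obtain ⟨v, hv⟩ := hex
    refine ⟨(t, v), Fin.snoc (fun i => Sum.inl (f i)) (Sum.inr v), ?_, ?_⟩
    · intro i
      induction i using Fin.lastCases with
      | last => exact (congrArg (fun x => (zykovStep P).mem (t, v) x) (Fin.snoc_last (α := fun _ => (zykovStep P).W) (p := fun i => Sum.inl (f i)) (x := Sum.inr v))).mpr rfl
      | cast j => exact (congrArg (fun x => (zykovStep P).mem (t, v) x) (Fin.snoc_castSucc (α := fun _ => (zykovStep P).W) (p := fun i => Sum.inl (f i)) (x := Sum.inr v) (i := j))).mpr (hmem j)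
    · intro i j hij
      have hmemS : ∀ i : Fin (n+1), c (Sum.inl (f i)) ∈ S := by
        intro i; rw [hS]; exact Finset.mem_image_of_mem _ (Finset.mem_univ i)
      induction i using Fin.lastCases with
      | last =>
        induction j using Fin.lastCases with
        | last => rfl
        | cast j' =>
          simp only [Fin.snoc_last, Fin.snoc_castSucc] at hij
          have hij' : c (Sum.inr v) = c (Sum.inl (f j')) :=
            (congrArg c (Fin.snoc_last (α := fun _ => (zykovStep P).W) (p := fun i => Sum.inl (f i)) (x := Sum.inr v))).symm.trans (hij.trans (congrArg c (Fin.snoc_castSucc (α := fun _ => (zykovStep P).W) (p := fun i => Sum.inl (f i)) (x := Sum.inr v) (i := j'))))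
          exact absurd (hij' ▸ hmemS j') hv
      | cast i' =>
        induction j using Fin.lastCases with
        | last =>
          simp only [Fin.snoc_last, Fin.snoc_castSucc] at hij
          have hij' : c (Sum.inr v) = c (Sum.inl (f i')) :=
            ((congrArg c (Fin.snoc_castSucc (α := fun _ => (zykovStep P).W) (p := fun i => Sum.inl (f i)) (x := Sum.inr v) (i := i'))).symm.trans (hij.trans (congrArg c (Fin.snoc_last (α := fun _ => (zykovStep P).W) (p := fun i => Sum.inl (f i)) (x := Sum.inr v))))).symm
          exact absurd (hij' ▸ hmemS i') hv
        | cast j' =>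
          simp only [Fin.snoc_castSucc] at hij
          exact congrArg Fin.castSucc (hinj2
            ((congrArg c (Fin.snoc_castSucc (α := fun _ => (zykovStep P).W) (p := fun i => Sum.inl (f i)) (x := Sum.inr v) (i := i'))).symm.trans (hij.trans (congrArg c (Fin.snoc_castSucc (α := fun _ => (zykovStep P).W) (p := fun i => Sum.inl (f i)) (x := Sum.inr v) (i := j'))))))

end ZykovAux

/-- for every k ≥ 1, the Zykov graph Z_k is triangle-free and has chromatic
number exactly k. -/
theorem zykovGraph_cliqueFree_chromaticNumber (k : ℕ) (hk : 1 ≤ k) :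
    (zykovGraph k).CliqueFree 3 ∧ (zykovGraph k).chromaticNumber = (k : ℕ∞) := by
  cases k with
  | zero => omega
  | succ n =>
    obtain ⟨-, hV3, -, -, hVcol, hVncol, -⟩ := zykovInv n
    refine ⟨hV3, ?_⟩
    have h1 : (zykovGraph (n+1)).chromaticNumber ≤ (n+1 : ℕ) :=
      hVcol.chromaticNumber_le
    have h2 : ¬ (zykovGraph (n+1)).chromaticNumber ≤ (n : ℕ) := fun h =>
      hVncol (SimpleGraph.chromaticNumber_le_iff_colorable.mp h)
    have h3 : ((n : ℕ∞)) < (zykovGraph (n+1)).chromaticNumber := lt_of_not_ge h2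
    have h4 := Order.add_one_le_of_lt h3
    refine le_antisymm (by exact_mod_cast h1) ?_
    exact_mod_cast h4
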